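/- Consider one step of the WC-Penalty iteration at θ_t = (ρ_t, z_t, δ_t) ∈ C with d_t = (θ_t − θ_{t+1})/η and components d_{t,ρ}, d_{t,z}, d_{t,δ}. With the dual choices ω_{t,s} = v(λ_s f_s(z_t) + δ_{t,s} − ρ_t) and ν_{t,i} = u h_i(z_t), the squared KKT residual decomposes exactly as ‖𝒦(ρ_t, z_t, ω_t, ν_t, λ)‖² = |d_{t,ρ}|² + ‖d_{t,z}‖² + ‖h(z_t)‖² + Σ_{s=1}^S (min{ω_{t,s}, ρ_t − λ_s f_s(z_t)})²; in particular d_{t,ρ} = ∇_ρ P(θ_t) = −(Σ_s ω_{t,s} − 1) and d_{t,z} = ∇_z P(θ_t) = Σ_s ω_{t,s} λ_s ∇f_s(z_t) + Σ_i ν_{t,i} ∇h_i(z_t). -/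

import Mathlib

/-!
With `ω_s = v r_s` and `ν_i = u h_i(z)`, where `r_s = λ_s f_s(z) + δ_s − ρ`, the partial gradients
`∇_ρ P = 1 − v Σ_s r_s` and `∇_z P = u Σ_i h_i ∇h_i + v Σ_s r_s λ_s ∇f_s` are exactly minus the
dual-feasibility block and the stationarity block of `𝒦`. The projection onto `C` only clips `δ`,
so `(dρ, dz)` is this gradient, and the decomposition is `‖𝒦‖²` with its first two blocks
renamed.
-/

open scoped RealInnerProductSpace

noncomputable section

/-- The squared norm `‖𝒦(ρ, z, ω, ν, λ)‖²` of the KKT residual map, whose blocks are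
`(Σ_s ω_s − 1; Σ_s ω_s λ_s ∇f_s(z) + Σ_i ν_i ∇h_i(z); h(z); (min{ω_s, ρ − λ_s f_s(z)})_s)`. -/
def Ksq (k S q : ℕ)
    (f : Fin S → EuclideanSpace ℝ (Fin k) → ℝ)
    (h : Fin q → EuclideanSpace ℝ (Fin k) → ℝ)
    (lam : Fin S → ℝ) (ρ : ℝ) (z : EuclideanSpace ℝ (Fin k))
    (ω : Fin S → ℝ) (ν : Fin q → ℝ) : ℝ :=
  (∑ s, ω s - 1) ^ 2
    + ‖∑ s, (ω s * lam s) • gradient (f s) z + ∑ i, ν i • gradient (h i) z‖ ^ 2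
    + ∑ i, (h i z) ^ 2
    + ∑ s, (min (ω s) (ρ - lam s * f s z)) ^ 2

section PenaltyGradient

variable {ι : Type*} [Fintype ι]

theorem penaltyGrad_rho_eq_neg_dual_residual (v : ℝ) (r ω : ι → ℝ)
    (hω : ∀ s, ω s = v * r s) :
    1 - v * ∑ s, r s = -(∑ s, ω s - 1) := by
  simp only [hω, ← Finset.mul_sum]
  ring

theorem penaltyGrad_z_eq_stationarity_residual {κ E : Type*} [Fintype κ]
    [AddCommGroup E] [Module ℝ E] (u v : ℝ) (c : κ → ℝ) (gh : κ → E)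
    (r lam : ι → ℝ) (gf : ι → E) (ω : ι → ℝ) (ν : κ → ℝ)
    (hω : ∀ s, ω s = v * r s) (hν : ∀ i, ν i = u * c i) :
    u • ∑ i, c i • gh i + v • ∑ s, (r s * lam s) • gf s
      = ∑ s, (ω s * lam s) • gf s + ∑ i, ν i • gh i := by
  simp only [Finset.smul_sum, smul_smul, hω, hν, mul_assoc]
  exact add_comm _ _

end PenaltyGradient

theorem wcPenalty_kkt_decomposition_general
    (k S q : ℕ)
    (f : Fin S → EuclideanSpace ℝ (Fin k) → ℝ)
    (h : Fin q → EuclideanSpace ℝ (Fin k) → ℝ)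
    (u v η : ℝ) (hη : 0 < η)
    (lam : Fin S → ℝ)
    -- the current iterate `θ_t = (ρ, z, δ) ∈ C`
    (ρ : ℝ) (z : EuclideanSpace ℝ (Fin k)) (δ : Fin S → ℝ)
    -- the next iterate: `(ρ', z')` by an unprojected gradient step, `δ'` clipped at `0`
    (ρ' : ℝ) (z' : EuclideanSpace ℝ (Fin k))
    (hρ' : ρ' = ρ - η * (1 - v * ∑ s, (lam s * f s z + δ s - ρ)))
    (hz' : z' = z - η • (u • ∑ i, h i z • gradient (h i) z
        + v • ∑ s, ((lam s * f s z + δ s - ρ) * lam s) • gradient (f s) z))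
    -- the ρ- and z-components of the update direction `d_t = (θ_t − θ_{t+1})/η`
    (dρ : ℝ) (dz : EuclideanSpace ℝ (Fin k))
    (hdρ : dρ = (ρ - ρ') / η)
    (hdz : dz = η⁻¹ • (z - z'))
    -- the dual choices
    (ω : Fin S → ℝ) (ν : Fin q → ℝ)
    (hω : ∀ s, ω s = v * (lam s * f s z + δ s - ρ))
    (hν : ∀ i, ν i = u * h i z) :
    Ksq k S q f h lam ρ z ω ν
        = dρ ^ 2 + ‖dz‖ ^ 2 + ∑ i, (h i z) ^ 2
          + ∑ s, (min (ω s) (ρ - lam s * f s z)) ^ 2 ∧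
    dρ = -(∑ s, ω s - 1) ∧
    dz = ∑ s, (ω s * lam s) • gradient (f s) z + ∑ i, ν i • gradient (h i) z := by
  have hdρ_eq : dρ = -(∑ s, ω s - 1) := by
    rw [hdρ, hρ', sub_sub_cancel, mul_div_cancel_left₀ _ hη.ne',
      penaltyGrad_rho_eq_neg_dual_residual v _ ω hω]
  have hdz_eq : dz = ∑ s, (ω s * lam s) • gradient (f s) z + ∑ i, ν i • gradient (h i) z := by
    rw [hdz, hz', sub_sub_cancel, inv_smul_smul₀ hη.ne',
      penaltyGrad_z_eq_stationarity_residual u v _ _ _ lam _ ω ν hω hν]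
  exact ⟨by rw [Ksq, hdρ_eq, hdz_eq, neg_sq], hdρ_eq, hdz_eq⟩

/-- **exact decomposition of the KKT residual along the WC-Penalty step.**
Consider one step of the WC-Penalty iteration at `θ_t = (ρ, z, δ) ∈ C`, with update
direction `d_t = (θ_t − θ_{t+1})/η` (whose `ρ`- and `z`-components are unaffected by the
projection). With the dual choices `ω_s = v(λ_s f_s(z) + δ_s − ρ)` and `ν_i = u h_i(z)`,
one has `‖𝒦(ρ, z, ω, ν, λ)‖² = |dρ|² + ‖dz‖² + ‖h(z)‖² + Σ_s (min{ω_s, ρ − λ_s f_s(z)})²`,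
and moreover `dρ = ∇_ρ P(θ_t) = −(Σ_s ω_s − 1)` and
`dz = ∇_z P(θ_t) = Σ_s ω_s λ_s ∇f_s(z) + Σ_i ν_i ∇h_i(z)`. -/
theorem wcPenalty_kkt_decomposition
    (k S q : ℕ)
    (f : Fin S → EuclideanSpace ℝ (Fin k) → ℝ)
    (h : Fin q → EuclideanSpace ℝ (Fin k) → ℝ)
    (hf : ∀ s, ContDiff ℝ 1 (f s))
    (hh : ∀ i, ContDiff ℝ 1 (h i))
    (u v η : ℝ) (hu : 0 < u) (hv : 0 < v) (hη : 0 < η)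
    (lam : Fin S → ℝ) (hlam_pos : ∀ s, 0 < lam s) (hlam_sum : ∑ s, lam s = 1)
    -- the current iterate `θ_t = (ρ, z, δ) ∈ C`
    (ρ : ℝ) (z : EuclideanSpace ℝ (Fin k)) (δ : Fin S → ℝ) (hδ : ∀ s, 0 ≤ δ s)
    -- the next iterate: `(ρ', z')` by an unprojected gradient step, `δ'` clipped at `0`
    (ρ' : ℝ) (z' : EuclideanSpace ℝ (Fin k)) (δ' : Fin S → ℝ)
    (hρ' : ρ' = ρ - η * (1 - v * ∑ s, (lam s * f s z + δ s - ρ)))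
    (hz' : z' = z - η • (u • ∑ i, h i z • gradient (h i) z
        + v • ∑ s, ((lam s * f s z + δ s - ρ) * lam s) • gradient (f s) z))
    (hδ' : ∀ s, δ' s = max (δ s - η * (v * (lam s * f s z + δ s - ρ))) 0)
    -- the ρ- and z-components of the update direction `d_t = (θ_t − θ_{t+1})/η`
    (dρ : ℝ) (dz : EuclideanSpace ℝ (Fin k))
    (hdρ : dρ = (ρ - ρ') / η)
    (hdz : dz = η⁻¹ • (z - z'))
    -- the dual choices
    (ω : Fin S → ℝ) (ν : Fin q → ℝ)
    (hω : ∀ s, ω s = v * (lam s * f s z + δ s - ρ))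
    (hν : ∀ i, ν i = u * h i z) :
    Ksq k S q f h lam ρ z ω ν
        = dρ ^ 2 + ‖dz‖ ^ 2 + ∑ i, (h i z) ^ 2
          + ∑ s, (min (ω s) (ρ - lam s * f s z)) ^ 2 ∧
    dρ = -(∑ s, ω s - 1) ∧
    dz = ∑ s, (ω s * lam s) • gradient (f s) z + ∑ i, ν i • gradient (h i) z :=
  wcPenalty_kkt_decomposition_general k S q f h u v η hη lam ρ z δ ρ' z' hρ' hz' dρ dz hdρ hdz ω ν
    hω hν
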